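/- Suppose the ruled strip f(t,v) = c(t) + v ξ(t) is developable. Then for all t ∈ I and all v the coefficients of the first fundamental form of f are E(t,v) := f_t · f_t = (sin β(t) − v(β'(t) + κ(t) cos α(t)))² + cos² β(t), F(t,v) := f_t · f_v = cos β(t), and G(t,v) := f_v · f_v = 1; in particular along the curve (v = 0) one has E = 1, F = cos β, G = 1. -/

import Mathlib

noncomputable section
open Real Set
open scoped ContDiff

local notation "⟪" x ", " y "⟫" => @inner ℝ _ _ x y

/-- Euclidean 3-space. -/
abbrev E3 := EuclideanSpace ℝ (Fin 3)

/-- The vector (cross) product of `ℝ³`. -/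
def cross3 (u v : E3) : E3 :=
  (WithLp.equiv 2 (Fin 3 → ℝ)).symm
    ![u 1 * v 2 - u 2 * v 1, u 2 * v 0 - u 0 * v 2, u 0 * v 1 - u 1 * v 0]

/-!
Along the curve, `ξ` is a unit field with `⟪ξ, c'⟫ = cos β`. Differentiating these two
identities gives `ξ' ⊥ ξ` and `⟪ξ', c'⟫ = -sin β (β' + κ cos α)`, using `c'' = κ n` and
`⟪ξ, n⟫ = sin β cos α`. Developability says `ξ' ⊥ c' × ξ` as well, so `ξ'` is parallel to the
component of `c'` orthogonal to `ξ`, which has length `sin β`; hence `|ξ'| = |β' + κ cos α|`,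
and `E = |c' + v ξ'|²`, `F = ⟪c' + v ξ', ξ⟫`, `G = |ξ|²` follow by expanding.
-/

lemma inner_cross3_left_self (u v : E3) : ⟪cross3 u v, u⟫ = 0 := by
  simp [cross3, PiLp.inner_apply, Fin.sum_univ_three, -inner_self_eq_norm_sq_to_K]; ring

lemma inner_cross3_right_self (u v : E3) : ⟪cross3 u v, v⟫ = 0 := by
  simp [cross3, PiLp.inner_apply, Fin.sum_univ_three, -inner_self_eq_norm_sq_to_K]; ring

lemma inner_cross3_self (u v : E3) :
    ⟪cross3 u v, cross3 u v⟫ = ⟪u, u⟫ * ⟪v, v⟫ - ⟪u, v⟫ ^ 2 := by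
  simp [cross3, PiLp.inner_apply, Fin.sum_univ_three, -inner_self_eq_norm_sq_to_K]; ring

/-- The Gram determinant of `w, u, v` is the square of their triple product. -/
lemma inner_cross3_sq (w u v : E3) :
    ⟪w, cross3 u v⟫ ^ 2 = ⟪w, w⟫ * (⟪u, u⟫ * ⟪v, v⟫ - ⟪u, v⟫ ^ 2) - ⟪w, u⟫ ^ 2 * ⟪v, v⟫
      - ⟪w, v⟫ ^ 2 * ⟪u, u⟫ + 2 * ⟪w, u⟫ * ⟪w, v⟫ * ⟪u, v⟫ := by
  simp [cross3, PiLp.inner_apply, Fin.sum_univ_three, -inner_self_eq_norm_sq_to_K]; ring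

lemma DifferentiableAt.cross3 {u v : ℝ → E3} {t : ℝ} (hu : DifferentiableAt ℝ u t)
    (hv : DifferentiableAt ℝ v t) : DifferentiableAt ℝ (fun s => cross3 (u s) (v s)) t := by
  have hu' := differentiableAt_euclidean.mp hu
  have hv' := differentiableAt_euclidean.mp hv
  refine differentiableAt_euclidean.mpr fun i => ?_
  fin_cases i <;> exact ((hu' _).mul (hv' _)).sub ((hu' _).mul (hv' _))

/-- The unit vector with polar angle `β` from `e` and azimuth `α` in the frame `n, e × n`. -/
def frameDir (α β : ℝ) (e n : E3) : E3 :=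
  cos β • e + sin β • (cos α • n + sin α • cross3 e n)

section frameDir

variable {e n : E3}

lemma inner_frameDir_left (α β : ℝ) (he : ⟪e, e⟫ = 1) (hen : ⟪e, n⟫ = 0) :
    ⟪frameDir α β e n, e⟫ = cos β := by
  simp only [frameDir, inner_add_left, real_inner_smul_left, he, real_inner_comm e n, hen,
    inner_cross3_left_self]
  ring

lemma inner_frameDir_right (α β : ℝ) (hn : ⟪n, n⟫ = 1) (hen : ⟪e, n⟫ = 0) :
    ⟪frameDir α β e n, n⟫ = sin β * cos α := by
  simp only [frameDir, inner_add_left, real_inner_smul_left, hn, hen, inner_cross3_right_self]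
  ring

lemma inner_frameDir_self (α β : ℝ) (he : ⟪e, e⟫ = 1) (hn : ⟪n, n⟫ = 1) (hen : ⟪e, n⟫ = 0) :
    ⟪frameDir α β e n, frameDir α β e n⟫ = 1 := by
  have hb : ⟪cross3 e n, cross3 e n⟫ = 1 := by rw [inner_cross3_self, he, hn, hen]; norm_num
  have heb : ⟪e, cross3 e n⟫ = 0 := by rw [real_inner_comm, inner_cross3_left_self]
  have hnb : ⟪n, cross3 e n⟫ = 0 := by rw [real_inner_comm, inner_cross3_right_self]
  simp only [frameDir, inner_add_left, inner_add_right, real_inner_smul_left,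
    real_inner_smul_right, he, hn, hb, hen, heb, hnb, real_inner_comm e n,
    inner_cross3_left_self, inner_cross3_right_self]
  linear_combination sin_sq_add_cos_sq β + sin β ^ 2 * sin_sq_add_cos_sq α

lemma DifferentiableAt.frameDir {α β : ℝ → ℝ} {e n : ℝ → E3} {t : ℝ}
    (hα : DifferentiableAt ℝ α t) (hβ : DifferentiableAt ℝ β t)
    (he : DifferentiableAt ℝ e t) (hn : DifferentiableAt ℝ n t) :
    DifferentiableAt ℝ (fun s => _root_.frameDir (α s) (β s) (e s) (n s)) t :=
  (hβ.cos.smul he).add (hβ.sin.smul ((hα.cos.smul hn).add (hα.sin.smul (he.cross3 hn))))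

end frameDir

lemma inner_self_mul_eq_sq_of_perp_cross3 {e ξ w : E3} (he : ⟪e, e⟫ = 1) (hξ : ⟪ξ, ξ⟫ = 1)
    (hξw : ⟪ξ, w⟫ = 0) (hw : ⟪cross3 e ξ, w⟫ = 0) :
    ⟪w, w⟫ * (1 - ⟪ξ, e⟫ ^ 2) = ⟪w, e⟫ ^ 2 := by
  have h := inner_cross3_sq w e ξ
  rw [real_inner_comm, hw, he, hξ, real_inner_comm ξ w, hξw, real_inner_comm ξ e] at h
  linear_combination -h

lemma inner_add_smul_self_of_perp_cross3 {e ξ w : E3} {β S : ℝ} (he : ⟪e, e⟫ = 1)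
    (hξ : ⟪ξ, ξ⟫ = 1) (hξe : ⟪ξ, e⟫ = cos β) (hβ : sin β ≠ 0) (hξw : ⟪ξ, w⟫ = 0)
    (hw : ⟪cross3 e ξ, w⟫ = 0) (hwe : ⟪w, e⟫ = -sin β * S) (v : ℝ) :
    ⟪e + v • w, e + v • w⟫ = (sin β - v * S) ^ 2 + cos β ^ 2 := by
  have hww : ⟪w, w⟫ = S ^ 2 := by
    have h := inner_self_mul_eq_sq_of_perp_cross3 he hξ hξw hw
    rw [hξe, hwe, ← sin_sq] at h
    exact mul_right_cancel₀ (pow_ne_zero 2 hβ) (h.trans (by ring))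
  have hew : ⟪e, w⟫ = -sin β * S := by rw [real_inner_comm, hwe]
  simp only [inner_add_left, inner_add_right, real_inner_smul_left, real_inner_smul_right, he,
    hww, hew, hwe]
  linear_combination -(sin_sq_add_cos_sq β)

section Calculus

variable {F : Type*} [NormedAddCommGroup F] [InnerProductSpace ℝ F] {a b t : ℝ}

lemma deriv_eq_of_eqOn_Icc {G : Type*} [NormedAddCommGroup G] [NormedSpace ℝ G] {g h : ℝ → G}
    (hab : a < b) (hgh : EqOn g h (Icc a b)) (ht : t ∈ Icc a b)
    (hg : DifferentiableAt ℝ g t) (hh : DifferentiableAt ℝ h t) : deriv g t = deriv h t := by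
  have hU := uniqueDiffOn_Icc hab t ht
  rw [← hg.derivWithin hU, ← hh.derivWithin hU, derivWithin_congr hgh (hgh ht)]

lemma inner_deriv_add_inner_deriv_of_eqOn_Icc {u v : ℝ → F} {g : ℝ → ℝ} (hab : a < b)
    (huv : ∀ s ∈ Icc a b, ⟪u s, v s⟫ = g s) (ht : t ∈ Icc a b) (hu : DifferentiableAt ℝ u t)
    (hv : DifferentiableAt ℝ v t) (hg : DifferentiableAt ℝ g t) :
    ⟪deriv u t, v t⟫ + ⟪u t, deriv v t⟫ = deriv g t := by
  have hder := hu.hasDerivAt.inner ℝ hv.hasDerivAt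
  rw [← deriv_eq_of_eqOn_Icc hab huv ht hder.differentiableAt hg, hder.deriv, add_comm]

lemma inner_deriv_eq_zero_of_inner_self_eqOn_Icc {u : ℝ → F} {r : ℝ} (hab : a < b)
    (hu : ∀ s ∈ Icc a b, ⟪u s, u s⟫ = r) (ht : t ∈ Icc a b) (hd : DifferentiableAt ℝ u t) :
    ⟪u t, deriv u t⟫ = 0 := by
  have h := inner_deriv_add_inner_deriv_of_eqOn_Icc hab hu ht hd hd (differentiableAt_const r)
  rw [deriv_const, real_inner_comm (u t)] at h
  linarith

end Calculus

def unitNormal (c : ℝ → E3) (t : ℝ) : E3 := ‖deriv (deriv c) t‖⁻¹ • deriv (deriv c) t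

section Curve

variable {c : ℝ → E3} {a b t : ℝ}

lemma norm_smul_unitNormal (c : ℝ → E3) (t : ℝ) :
    ‖deriv (deriv c) t‖ • unitNormal c t = deriv (deriv c) t := by
  by_cases h : deriv (deriv c) t = 0
  · simp [unitNormal, h]
  · rw [unitNormal, smul_inv_smul₀ (norm_ne_zero_iff.mpr h)]

lemma DifferentiableAt.unitNormal (hc : DifferentiableAt ℝ (deriv (deriv c)) t)
    (h0 : deriv (deriv c) t ≠ 0) : DifferentiableAt ℝ (unitNormal c) t :=
  ((hc.norm ℝ h0).inv (norm_ne_zero_iff.mpr h0)).smul hc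

lemma orthonormal_deriv_unitNormal (hab : a < b) (harc : ∀ s ∈ Icc a b, ‖deriv c s‖ = 1)
    (ht : t ∈ Icc a b) (hc : DifferentiableAt ℝ (deriv c) t) (h0 : deriv (deriv c) t ≠ 0) :
    ⟪deriv c t, deriv c t⟫ = 1 ∧ ⟪unitNormal c t, unitNormal c t⟫ = 1 ∧
      ⟪deriv c t, unitNormal c t⟫ = 0 := by
  have hunit : ∀ s ∈ Icc a b, ⟪deriv c s, deriv c s⟫ = 1 := fun s hs => by
    rw [real_inner_self_eq_norm_sq, harc s hs, one_pow]
  refine ⟨hunit t ht, ?_, ?_⟩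
  · rw [real_inner_self_eq_norm_sq, unitNormal, norm_smul, norm_inv, norm_norm,
      inv_mul_cancel₀ (norm_ne_zero_iff.mpr h0), one_pow]
  · rw [unitNormal, real_inner_smul_right,
      inner_deriv_eq_zero_of_inner_self_eqOn_Icc hab hunit ht hc, mul_zero]

lemma inner_frameDir_deriv_unitNormal (hab : a < b) (harc : ∀ s ∈ Icc a b, ‖deriv c s‖ = 1)
    (ht : t ∈ Icc a b) (hc : DifferentiableAt ℝ (deriv c) t) (h0 : deriv (deriv c) t ≠ 0)
    (α β : ℝ) :
    let ξ := frameDir α β (deriv c t) (unitNormal c t)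
    ⟪ξ, ξ⟫ = 1 ∧ ⟪ξ, deriv c t⟫ = cos β ∧
      ⟪ξ, deriv (deriv c) t⟫ = sin β * (‖deriv (deriv c) t‖ * cos α) := by
  obtain ⟨he, hn, hen⟩ := orthonormal_deriv_unitNormal hab harc ht hc h0
  refine ⟨inner_frameDir_self α β he hn hen, inner_frameDir_left α β he hen, ?_⟩
  conv_lhs => rw [← norm_smul_unitNormal]
  rw [real_inner_smul_right, inner_frameDir_right α β hn hen]
  ring

end Curve

lemma firstFundamentalForm_of_developable {c ξ : ℝ → E3} {β : ℝ → ℝ} {a b t K : ℝ}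
    (hab : a < b) (ht : t ∈ Icc a b) (hc : DifferentiableAt ℝ (deriv c) t)
    (hβ : DifferentiableAt ℝ β t) (hξd : DifferentiableAt ℝ ξ t)
    (he : ⟪deriv c t, deriv c t⟫ = 1) (hξ : ∀ s ∈ Icc a b, ⟪ξ s, ξ s⟫ = 1)
    (hξc : ∀ s ∈ Icc a b, ⟪ξ s, deriv c s⟫ = cos (β s))
    (hξc' : ⟪ξ t, deriv (deriv c) t⟫ = sin (β t) * K) (hsin : sin (β t) ≠ 0)
    (hdev : ⟪cross3 (deriv c t) (ξ t), deriv ξ t⟫ = 0) (v : ℝ) :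
    ⟪deriv c t + v • deriv ξ t, deriv c t + v • deriv ξ t⟫ =
        (sin (β t) - v * (deriv β t + K)) ^ 2 + cos (β t) ^ 2 ∧
      ⟪deriv c t + v • deriv ξ t, ξ t⟫ = cos (β t) := by
  have hξξ' := inner_deriv_eq_zero_of_inner_self_eqOn_Icc hab hξ ht hξd
  have hcos := hβ.hasDerivAt.cos
  have hξ'c : ⟪deriv ξ t, deriv c t⟫ = -sin (β t) * (deriv β t + K) := by
    have h := inner_deriv_add_inner_deriv_of_eqOn_Icc hab hξc ht hξd hc hcos.differentiableAt
    rw [hcos.deriv, hξc'] at h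
    linear_combination h
  refine ⟨inner_add_smul_self_of_perp_cross3 he (hξ t ht) (hξc t ht) hsin hξξ' hdev hξ'c v, ?_⟩
  rw [inner_add_left, real_inner_smul_left, real_inner_comm, hξc t ht, real_inner_comm, hξξ',
    mul_zero, add_zero]

theorem stmt2_general (a b : ℝ) (hab : a < b)
    (c : ℝ → E3) (hc : ContDiff ℝ ∞ c)
    (harc : ∀ t ∈ Icc a b, ‖deriv c t‖ = 1)
    (κ : ℝ → ℝ) (hκ : ∀ t, κ t = ‖deriv (deriv c) t‖)
    (hκpos : ∀ t ∈ Icc a b, 0 < κ t)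
    (e n bi : ℝ → E3)
    (he : ∀ t, e t = deriv c t)
    (hn : ∀ t, n t = (κ t)⁻¹ • deriv (deriv c) t)
    (hbi : ∀ t, bi t = cross3 (e t) (n t))
    (α β : ℝ → ℝ) (hα : ContDiff ℝ ∞ α) (hβ : ContDiff ℝ ∞ β)
    (hβ1 : ∀ t ∈ Icc a b, 0 < β t ∧ β t < π)
    (ξ : ℝ → E3)
    (hξ : ∀ t, ξ t = cos (β t) • e t +
      sin (β t) • (cos (α t) • n t + sin (α t) • bi t))
    (f : ℝ → ℝ → E3) (hf : ∀ t v, f t v = c t + v • ξ t)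
    (hdev : ∀ t ∈ Icc a b, ⟪cross3 (deriv c t) (ξ t), deriv ξ t⟫ = 0) :
    ∀ t ∈ Icc a b, ∀ v : ℝ,
      ⟪deriv (fun s => f s v) t, deriv (fun s => f s v) t⟫ =
        (sin (β t) - v * (deriv β t + κ t * cos (α t))) ^ 2 + cos (β t) ^ 2 ∧
      ⟪deriv (fun s => f s v) t, deriv (fun w => f t w) v⟫ = cos (β t) ∧
      ⟪deriv (fun w => f t w) v, deriv (fun w => f t w) v⟫ = 1 ∧
      ⟪deriv (fun s => f s 0) t, deriv (fun s => f s 0) t⟫ = 1 := by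
  intro t ht v
  have hc' : ContDiff ℝ ∞ (deriv c) := (contDiff_infty_iff_deriv.mp hc).2
  have hc'd : Differentiable ℝ (deriv c) := hc'.differentiable (by simp)
  have hc'' : Differentiable ℝ (deriv (deriv c)) :=
    (contDiff_infty_iff_deriv.mp hc').2.differentiable (by simp)
  have h0 : ∀ s ∈ Icc a b, deriv (deriv c) s ≠ 0 := fun s hs =>
    norm_pos_iff.mp (hκ s ▸ hκpos s hs)
  have hξ' : ξ = fun s => frameDir (α s) (β s) (deriv c s) (unitNormal c s) := funext fun s => by
    rw [hξ, hbi, he, hn, hκ]; rfl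
  have hξd : DifferentiableAt ℝ ξ t := hξ' ▸ (hα.differentiable (by simp) t).frameDir
    (hβ.differentiable (by simp) t) (hc'd t) ((hc'' t).unitNormal (h0 t ht))
  have hframe : ∀ s ∈ Icc a b, ⟪ξ s, ξ s⟫ = 1 ∧ ⟪ξ s, deriv c s⟫ = cos (β s) ∧
      ⟪ξ s, deriv (deriv c) s⟫ = sin (β s) * (κ s * cos (α s)) := fun s hs => by
    rw [hξ', hκ]
    exact inner_frameDir_deriv_unitNormal hab harc hs (hc'd s) (h0 s hs) _ _
  have hff := firstFundamentalForm_of_developable hab ht (hc'd t)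
    (hβ.differentiable (by simp) t) hξd (by rw [real_inner_self_eq_norm_sq, harc t ht, one_pow])
    (fun s hs => (hframe s hs).1) (fun s hs => (hframe s hs).2.1) (hframe t ht).2.2
    (sin_pos_of_pos_of_lt_pi (hβ1 t ht).1 (hβ1 t ht).2).ne' (hdev t ht)
  have hft : ∀ w, deriv (fun s => f s w) t = deriv c t + w • deriv ξ t := fun w => by
    simp_rw [hf]
    exact ((hc.differentiable (by simp) t).hasDerivAt.add (hξd.hasDerivAt.const_smul w)).deriv
  have hfv : deriv (fun w => f t w) v = ξ t := by
    simp_rw [hf]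
    simpa using (((hasDerivAt_id v).smul_const (ξ t)).const_add (c t)).deriv
  refine ⟨by rw [hft, (hff v).1], by rw [hft, hfv, (hff v).2], by rw [hfv, (hframe t ht).1], ?_⟩
  rw [hft, (hff 0).1]
  simp

/-- first fundamental form coefficients of a developable strip
`f(t,v) = c(t) + v ξ(t)`:  `E = (sin β - v(β' + κ cos α))² + cos² β`, `F = cos β`,
`G = 1`; in particular along the curve (`v = 0`) one has `E = 1`. -/
theorem stmt2 (a b : ℝ) (hab : a < b)
    (c : ℝ → E3) (hc : ContDiff ℝ ∞ c) (hinj : InjOn c (Icc a b))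
    (harc : ∀ t ∈ Icc a b, ‖deriv c t‖ = 1)
    (κ : ℝ → ℝ) (hκ : ∀ t, κ t = ‖deriv (deriv c) t‖)
    (hκpos : ∀ t ∈ Icc a b, 0 < κ t)
    (e n bi : ℝ → E3) (τ : ℝ → ℝ)
    (he : ∀ t, e t = deriv c t)
    (hn : ∀ t, n t = (κ t)⁻¹ • deriv (deriv c) t)
    (hbi : ∀ t, bi t = cross3 (e t) (n t))
    (hτ : ∀ t, τ t = ⟪deriv n t, bi t⟫)
    (α β : ℝ → ℝ) (hα : ContDiff ℝ ∞ α) (hβ : ContDiff ℝ ∞ β)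
    (hα1 : ∀ t ∈ Icc a b, 0 < |α t| ∧ |α t| < π / 2)
    (hβ1 : ∀ t ∈ Icc a b, 0 < β t ∧ β t < π)
    (ξ : ℝ → E3)
    (hξ : ∀ t, ξ t = cos (β t) • e t +
      sin (β t) • (cos (α t) • n t + sin (α t) • bi t))
    (f : ℝ → ℝ → E3) (hf : ∀ t v, f t v = c t + v • ξ t)
    (hdev : ∀ t ∈ Icc a b, ⟪cross3 (deriv c t) (ξ t), deriv ξ t⟫ = 0) :
    ∀ t ∈ Icc a b, ∀ v : ℝ,
      ⟪deriv (fun s => f s v) t, deriv (fun s => f s v) t⟫ =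
        (sin (β t) - v * (deriv β t + κ t * cos (α t))) ^ 2 + cos (β t) ^ 2 ∧
      ⟪deriv (fun s => f s v) t, deriv (fun w => f t w) v⟫ = cos (β t) ∧
      ⟪deriv (fun w => f t w) v, deriv (fun w => f t w) v⟫ = 1 ∧
      ⟪deriv (fun s => f s 0) t, deriv (fun s => f s 0) t⟫ = 1 :=
  stmt2_general a b hab c hc harc κ hκ hκpos e n bi he hn hbi α β hα hβ hβ1 ξ hξ f hf hdev
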